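/- Let X ∈ R^{d×N} have SVD X = U Σ V^T with rank r, and let the noise A satisfy that X + A is full rank. Then for the linear DAE minimizer W* = P_k(X)(X+A)^†, applied to noiseless test data x = U l in the span of U, the prediction W* x depends only on the top-k singular subspace of X and the restriction of (X+A)^† to that subspace; in particular, if A = 0, then W*(x) = P_{U_k} x, the orthogonal projection of x onto the top-k left singular subspace of X. -/

import Mathlib

open Matrix

/-- Squared Frobenius norm of a real matrix. -/
noncomputable def frobSq {m n : ℕ} (M : Matrix (Fin m) (Fin n) ℝ) : ℝ :=
  ∑ i, ∑ j, (M i j) ^ 2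

/-- `B` satisfies the four Moore–Penrose conditions for `A`. -/
def IsMoorePenroseInv {m n : ℕ} (A : Matrix (Fin m) (Fin n) ℝ)
    (B : Matrix (Fin n) (Fin m) ℝ) : Prop :=
  A * B * A = A ∧ B * A * B = B ∧ (A * B)ᵀ = A * B ∧ (B * A)ᵀ = B * A

/-- `P` is a best rank-`k` approximation of `X` in Frobenius norm. -/
noncomputable def IsBestRankApprox {m n : ℕ} (k : ℕ) (X P : Matrix (Fin m) (Fin n) ℝ) : Prop :=
  P.rank ≤ k ∧ ∀ Q : Matrix (Fin m) (Fin n) ℝ, Q.rank ≤ k → frobSq (X - P) ≤ frobSq (X - Q)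

/-!
Write `X = U Σ Vᵀ`. The Moore–Penrose inverse is unique, so `X⁺ = V Σ⁻¹ Uᵀ`, and everything
reduces to `P_k V = U Σ_k` for every best rank-`k` approximation `P_k`, where `Σ_k` keeps the top
`k` singular values. Let `π` be the orthogonal projection onto the column space of `P_k` and
`p_j = ‖π u_j‖²`. Column by column,
`‖(X - P_k) V‖² = ∑ s_j² (1 - p_j) + ∑ ‖s_j π u_j - (P_k V)_j‖²`,
and the weights satisfy `0 ≤ p_j ≤ 1`, `∑ p_j ≤ rank P_k ≤ k` (Bessel). Comparing with the error
`∑_{j ≥ k} s_j²` of the truncated SVD gives `∑_{j < k} s_j² ≤ ∑ s_j² p_j`; since the `s_j` strictly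
decrease, a threshold between `s_{k-1}²` and `s_k²` shows that `p_j = [j < k]` is the only such
choice of weights. Then the remainder vanishes, so `(P_k V)_j = s_j π u_j = [j < k] s_j u_j`.
-/

open Finset

section InnerProductSpace

variable {𝕜 E : Type*} [RCLike 𝕜] [NormedAddCommGroup E] [InnerProductSpace 𝕜 E]

theorem Submodule.norm_sub_sq_of_mem (K : Submodule 𝕜 E) [K.HasOrthogonalProjection] (v : E)
    {y : E} (hy : y ∈ K) :
    ‖v - y‖ ^ 2 = ‖v‖ ^ 2 - ‖K.starProjection v‖ ^ 2 + ‖K.starProjection v - y‖ ^ 2 := by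
  have pythagoras : ∀ z ∈ K, ‖v - K.starProjection v + z‖ ^ 2
      = ‖v - K.starProjection v‖ ^ 2 + ‖z‖ ^ 2 := fun z hz => by
    rw [@norm_add_sq 𝕜, K.starProjection_inner_eq_zero v z hz]
    simp
  have hvy := pythagoras _ (K.sub_mem (K.starProjection_apply_mem v) hy)
  have hv := pythagoras _ (K.starProjection_apply_mem v)
  rw [sub_add_sub_cancel] at hvy
  rw [sub_add_cancel] at hv
  linarith

theorem Orthonormal.sum_norm_sq_starProjection_le {ι : Type*} [Fintype ι] {u : ι → E}
    (hu : Orthonormal 𝕜 u) (K : Submodule 𝕜 E) [FiniteDimensional 𝕜 K] :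
    ∑ j, ‖K.starProjection (u j)‖ ^ 2 ≤ Module.finrank 𝕜 K := by
  set b := stdOrthonormalBasis 𝕜 K
  calc ∑ j, ‖K.starProjection (u j)‖ ^ 2
      = ∑ a, ∑ j, ‖inner 𝕜 (u j) (b a : E)‖ ^ 2 := by
        rw [sum_comm]
        refine sum_congr rfl fun j _ => ?_
        rw [K.starProjection_apply, Submodule.norm_coe, ← b.sum_sq_norm_inner_right]
        refine sum_congr rfl fun a _ => ?_
        rw [Submodule.inner_orthogonalProjectionOnto_eq_of_mem_left, norm_inner_symm]
    _ ≤ ∑ a, ‖(b a : E)‖ ^ 2 := sum_le_sum fun a _ => hu.sum_inner_products_le _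
    _ = Module.finrank 𝕜 K := by
      simp only [Submodule.norm_coe, b.orthonormal.1]
      simp

end InnerProductSpace

theorem eq_indicator_of_sum_le_sum_mul {ι : Type*} [Fintype ι] [DecidableEq ι] {S : Finset ι}
    {c p : ι → ℝ} (hcpos : ∀ i ∈ S, 0 < c i) (hgap : ∀ i ∈ S, ∀ j ∉ S, c j < c i)
    (hp0 : ∀ j, 0 ≤ p j) (hp1 : ∀ j, p j ≤ 1) (hsum : ∑ j, p j ≤ #S)
    (hval : ∑ i ∈ S, c i ≤ ∑ j, c j * p j) (j : ι) :
    p j = if j ∈ S then 1 else 0 := by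
  set e : ι → ℝ := fun j => if j ∈ S then 1 else 0
  obtain ⟨t, hlow, hhigh⟩ := exists_between' (insert 0 (Sᶜ.image c)) (S.image c) (by
    simp only [mem_insert, mem_image, mem_compl]
    rintro _ (rfl | ⟨j, hj, rfl⟩) _ ⟨i, hi, rfl⟩
    exacts [hcpos i hi, hgap i hi j hj])
  have ht : 0 < t := hlow 0 (mem_insert_self _ _)
  have hS : ∀ j ∈ S, t < c j := fun j hj => hhigh _ (mem_image_of_mem c hj)
  have hSc : ∀ j ∉ S, c j < t := fun j hj =>
    hlow _ (mem_insert_of_mem (mem_image_of_mem c (mem_compl.2 hj)))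
  have hterm : ∀ j, 0 ≤ (c j - t) * (e j - p j) := fun j => by
    by_cases hj : j ∈ S
    · simp only [e, hj, if_true]; nlinarith [hS j hj, hp1 j]
    · simp only [e, hj, if_false]; nlinarith [hSc j hj, hp0 j]
  have htotal : ∑ j, (c j - t) * (e j - p j)
      = (∑ i ∈ S, c i - ∑ j, c j * p j) + t * (∑ j, p j - #S) := by
    simp only [e, mul_sub, mul_ite, mul_one, mul_zero, sub_mul, sum_sub_distrib, sum_ite_mem,
      univ_inter, sum_const, nsmul_eq_mul, ← mul_sum]
    ring
  have hzero := (sum_eq_zero_iff_of_nonneg fun j _ => hterm j).1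
    (le_antisymm (by rw [htotal]; nlinarith) (sum_nonneg fun j _ => hterm j)) j
    (mem_univ j)
  have hne : c j - t ≠ 0 := by
    by_cases hj : j ∈ S
    exacts [sub_ne_zero.2 (hS j hj).ne', sub_ne_zero.2 (hSc j hj).ne]
  linarith [(mul_eq_zero.1 hzero).resolve_left hne]

theorem Orthonormal.eq_truncation_of_sum_norm_sub_sq_le {E ι : Type*} [NormedAddCommGroup E]
    [InnerProductSpace ℝ E] [Fintype ι] [DecidableEq ι] {S : Finset ι} {s : ι → ℝ}
    (hpos : ∀ i ∈ S, s i ≠ 0) (hgap : ∀ i ∈ S, ∀ j ∉ S, s j ^ 2 < s i ^ 2) {u y : ι → E}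
    (hu : Orthonormal ℝ u) (K : Submodule ℝ E) [FiniteDimensional ℝ K]
    (hK : Module.finrank ℝ K ≤ #S) (hy : ∀ j, y j ∈ K)
    (hle : ∑ j, ‖s j • u j - y j‖ ^ 2 ≤ ∑ j ∈ Sᶜ, s j ^ 2) (j : ι) :
    y j = if j ∈ S then s j • u j else 0 := by
  set p : ι → ℝ := fun j => ‖K.starProjection (u j)‖ ^ 2
  set R : ι → ℝ := fun j => ‖s j • K.starProjection (u j) - y j‖ ^ 2
  have hsplit : ∀ j, ‖s j • u j - y j‖ ^ 2 = s j ^ 2 - s j ^ 2 * p j + R j := fun j => by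
    rw [K.norm_sub_sq_of_mem _ (hy j), map_smul, norm_smul, norm_smul, hu.1 j]
    simp only [p, Real.norm_eq_abs, mul_pow, sq_abs]
    ring
  have hp1 : ∀ j, p j ≤ 1 := fun j => by
    simpa [p, hu.1 j] using
      pow_le_pow_left₀ (norm_nonneg _) (K.norm_starProjection_apply_le (u j)) 2
  have hR : ∑ j, R j + ∑ i ∈ S, s i ^ 2 ≤ ∑ j, s j ^ 2 * p j := by
    have := sum_add_sum_compl S fun j => s j ^ 2
    simp only [hsplit, sum_add_distrib, sum_sub_distrib] at hle
    linarith
  have hR0 : ∀ j, 0 ≤ R j := fun j => sq_nonneg _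
  have hpsum : ∑ j, p j ≤ #S :=
    (hu.sum_norm_sq_starProjection_le K).trans (by exact_mod_cast hK)
  have hp : ∀ j, p j = if j ∈ S then 1 else 0 :=
    eq_indicator_of_sum_le_sum_mul (c := fun j => s j ^ 2)
      (fun i hi => by have := hpos i hi; positivity) hgap (fun j => sq_nonneg _) hp1 hpsum
      (by linarith [sum_nonneg fun j (_ : j ∈ univ) => hR0 j])
  have hR_eq : ∑ j, R j = 0 := by
    have : ∑ j, s j ^ 2 * p j = ∑ i ∈ S, s i ^ 2 := by simp [hp, mul_ite, sum_ite_mem]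
    exact le_antisymm (by linarith) (sum_nonneg fun j _ => hR0 j)
  have hyj : y j = s j • K.starProjection (u j) := by
    have := (sum_eq_zero_iff_of_nonneg fun j _ => hR0 j).1 hR_eq j (mem_univ j)
    rw [← sub_eq_zero, ← norm_eq_zero, ← sq_eq_zero_iff]
    simpa [R, norm_sub_rev] using this
  rw [hyj]
  have hpj := hp j
  split_ifs at hpj ⊢ with hj
  · rw [K.starProjection_eq_self_iff.2 ((K.mem_iff_norm_starProjection _).2 ?_)]
    rw [hu.1 j]
    exact (pow_eq_one_iff_of_nonneg (norm_nonneg _) two_ne_zero).1 hpj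
  · rw [norm_eq_zero.1 (pow_eq_zero_iff two_ne_zero |>.1 hpj), smul_zero]

section Frobenius

variable {m n : ℕ}

def colVec (M : Matrix (Fin m) (Fin n) ℝ) (j : Fin n) : EuclideanSpace ℝ (Fin m) :=
  WithLp.toLp 2 fun i => M i j

theorem frobSq_eq_sum_norm_sq_colVec (M : Matrix (Fin m) (Fin n) ℝ) :
    frobSq M = ∑ j, ‖colVec M j‖ ^ 2 := by
  simp [frobSq, EuclideanSpace.norm_sq_eq, colVec, sum_comm (γ := Fin n)]

theorem inner_colVec_colVec {p : ℕ} (M : Matrix (Fin m) (Fin n) ℝ) (M' : Matrix (Fin m) (Fin p) ℝ)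
    (a : Fin n) (b : Fin p) : inner ℝ (colVec M a) (colVec M' b) = (Mᵀ * M') a b := by
  simp [colVec, PiLp.inner_apply, mul_apply, mul_comm]

theorem orthonormal_colVec {U : Matrix (Fin m) (Fin n) ℝ} (hU : Uᵀ * U = 1) :
    Orthonormal ℝ (colVec U) := by
  rw [orthonormal_iff_ite]
  intro a b
  rw [inner_colVec_colVec, hU, one_apply]

theorem colVec_mul {p : ℕ} (M : Matrix (Fin m) (Fin n) ℝ) (M' : Matrix (Fin n) (Fin p) ℝ)
    (j : Fin p) : colVec (M * M') j = toEuclideanLin M (colVec M' j) := by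
  ext i
  simp [colVec, mul_apply, mulVec, dotProduct]

theorem frobSq_mul_le {p : ℕ} (M : Matrix (Fin m) (Fin n) ℝ) {V : Matrix (Fin n) (Fin p) ℝ}
    (hV : Vᵀ * V = 1) : frobSq (M * V) ≤ frobSq M := by
  refine sum_le_sum fun i _ => ?_
  have := (orthonormal_colVec hV).sum_inner_products_le (WithLp.toLp 2 (M i)) (s := univ)
  simpa [EuclideanSpace.norm_sq_eq, colVec, PiLp.inner_apply, mul_apply, mul_comm] using this

theorem frobSq_eq_trace (M : Matrix (Fin m) (Fin n) ℝ) : frobSq M = (M * Mᵀ).trace := by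
  simp [frobSq, trace, mul_apply, sq]

theorem frobSq_mul_diagonal_mul_transpose {d p : ℕ} {U : Matrix (Fin d) (Fin n) ℝ}
    {V : Matrix (Fin p) (Fin n) ℝ} (hU : Uᵀ * U = 1) (hV : Vᵀ * V = 1) (c : Fin n → ℝ) :
    frobSq (U * diagonal c * Vᵀ) = ∑ j, c j ^ 2 := by
  have hgram : U * diagonal c * Vᵀ * (U * diagonal c * Vᵀ)ᵀ = U * diagonal (c * c) * Uᵀ := by
    simp only [transpose_mul, transpose_transpose, diagonal_transpose, Matrix.mul_assoc]
    rw [← Matrix.mul_assoc Vᵀ V, hV, Matrix.one_mul, ← Matrix.mul_assoc (diagonal c),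
      diagonal_mul_diagonal]
    rfl
  rw [frobSq_eq_trace, hgram, trace_mul_comm, ← Matrix.mul_assoc, hU, Matrix.one_mul,
    trace_diagonal]
  simp [sq]

end Frobenius

theorem finrank_range_toEuclideanLin {m n : ℕ} (A : Matrix (Fin m) (Fin n) ℝ) :
    Module.finrank ℝ (LinearMap.range (toEuclideanLin A)) = A.rank := by
  have : toEuclideanLin A =
      ((WithLp.linearEquiv 2 ℝ (Fin m → ℝ)).symm : (Fin m → ℝ) →ₗ[ℝ] _) ∘ₗ A.mulVecLin ∘ₗ
        (WithLp.linearEquiv 2 ℝ (Fin n → ℝ) : _ →ₗ[ℝ] (Fin n → ℝ)) := rfl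
  rw [this, LinearMap.range_comp, LinearMap.range_comp_of_range_eq_top _ (LinearEquiv.range _),
    LinearEquiv.finrank_map_eq]
  rfl

theorem sum_castLE_eq_sum_ite {M : Type*} [AddCommMonoid M] {k r : ℕ} (hkr : k ≤ r)
    (f : Fin r → M) :
    ∑ a : Fin k, f (Fin.castLE hkr a) = ∑ j : Fin r, if (j : ℕ) < k then f j else 0 := by
  rw [← sum_filter]
  refine sum_nbij (Fin.castLE hkr) (fun a _ => by simp) (Fin.castLE_injective hkr).injOn
    (fun j hj => ⟨⟨j, (mem_filter.1 hj).2⟩, mem_univ _, rfl⟩) (fun _ _ => rfl)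

theorem submatrix_castLE_mul_transpose {R : Type*} [Semiring R] {d r k : ℕ} (hkr : k ≤ r)
    (U : Matrix (Fin d) (Fin r) R) :
    U.submatrix id (Fin.castLE hkr) * (U.submatrix id (Fin.castLE hkr))ᵀ
      = U * diagonal (fun j : Fin r => if (j : ℕ) < k then (1 : R) else 0) * Uᵀ := by
  ext i i'
  rw [mul_apply, mul_apply]
  refine (sum_castLE_eq_sum_ite hkr fun j => U i j * U i' j).trans (sum_congr rfl fun j _ => ?_)
  rw [mul_diagonal, transpose_apply]
  split_ifs <;> simp

namespace IsMoorePenroseInv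

variable {m n : ℕ} {A : Matrix (Fin m) (Fin n) ℝ} {B C : Matrix (Fin n) (Fin m) ℝ}

theorem unique (hB : IsMoorePenroseInv A B) (hC : IsMoorePenroseInv A C) : B = C := by
  obtain ⟨hB1, hB2, hB3, hB4⟩ := hB
  obtain ⟨hC1, hC2, hC3, hC4⟩ := hC
  have hleft : B = B * A * C :=
    calc B = B * (A * B)ᵀ := by rw [hB3, ← Matrix.mul_assoc, hB2]
      _ = B * (A * C * (A * B))ᵀ := by rw [← Matrix.mul_assoc, hC1]
      _ = B * A * B * A * C := by
        rw [transpose_mul, hB3, hC3]; simp only [Matrix.mul_assoc]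
      _ = B * A * C := by rw [hB2]
  have hright : C = B * A * C :=
    calc C = (C * A)ᵀ * C := by rw [hC4, hC2]
      _ = (C * A * (B * A))ᵀ * C := by
        rw [← Matrix.mul_assoc (C * A), Matrix.mul_assoc C A B, Matrix.mul_assoc C (A * B), hB1]
      _ = B * A * (C * A * C) := by
        rw [transpose_mul, hB4, hC4]; simp only [Matrix.mul_assoc]
      _ = B * A * C := by rw [hC2]
  rw [hleft, ← hright]

end IsMoorePenroseInv

theorem isMoorePenroseInv_mul_diagonal_mul_transpose {m n r : ℕ} {U : Matrix (Fin m) (Fin r) ℝ}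
    {V : Matrix (Fin n) (Fin r) ℝ} (hU : Uᵀ * U = 1) (hV : Vᵀ * V = 1) {s : Fin r → ℝ}
    (hs : ∀ i, s i ≠ 0) :
    IsMoorePenroseInv (U * diagonal s * Vᵀ) (V * diagonal s⁻¹ * Uᵀ) := by
  have hU' : ∀ {p} (M : Matrix (Fin r) (Fin p) ℝ), Uᵀ * (U * M) = M := fun M => by
    rw [← Matrix.mul_assoc, hU, Matrix.one_mul]
  have hV' : ∀ {p} (M : Matrix (Fin r) (Fin p) ℝ), Vᵀ * (V * M) = M := fun M => by
    rw [← Matrix.mul_assoc, hV, Matrix.one_mul]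
  have hss : ∀ {p} (M : Matrix (Fin r) (Fin p) ℝ), diagonal s * (diagonal s⁻¹ * M) = M :=
    fun M => by
      rw [← Matrix.mul_assoc, diagonal_mul_diagonal, ← Matrix.one_mul M, ← diagonal_one]
      simp [hs]
  have hss' : ∀ {p} (M : Matrix (Fin r) (Fin p) ℝ), diagonal s⁻¹ * (diagonal s * M) = M :=
    fun M => by
      rw [← Matrix.mul_assoc, diagonal_mul_diagonal, ← Matrix.one_mul M, ← diagonal_one]
      simp [hs]
  refine ⟨?_, ?_, ?_, ?_⟩ <;>
    simp only [Matrix.mul_assoc, hU', hV', hss, hss', transpose_mul, transpose_transpose]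

theorem IsBestRankApprox.mul_eq_of_svd {d N r k : ℕ} (hkr : k ≤ r)
    {X P : Matrix (Fin d) (Fin N) ℝ} {U : Matrix (Fin d) (Fin r) ℝ} {V : Matrix (Fin N) (Fin r) ℝ}
    {s : Fin r → ℝ} (hU : Uᵀ * U = 1) (hV : Vᵀ * V = 1) (hs : StrictAnti s)
    (hspos : ∀ i, 0 < s i) (hSVD : X = U * diagonal s * Vᵀ) (hP : IsBestRankApprox k X P) :
    P * V = U * diagonal (fun j : Fin r => if (j : ℕ) < k then s j else 0) := by
  set S : Finset (Fin r) := {j | (j : ℕ) < k}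
  have hS : ∀ j, j ∈ S ↔ (j : ℕ) < k := by simp [S]
  set sk : Fin r → ℝ := fun j => if (j : ℕ) < k then s j else 0
  have hrank : (U * diagonal sk * Vᵀ).rank ≤ k :=
    calc _ ≤ (diagonal sk).rank := (rank_mul_le_left _ _).trans (rank_mul_le_right _ _)
      _ = #{j | sk j ≠ 0} := by rw [rank_diagonal, Fintype.card_subtype]
      _ ≤ #S := card_le_card fun j => by simp [sk, S]; tauto
      _ = k := by simp [S, Fin.card_filter_val_lt, hkr]
  have herr : frobSq (X - U * diagonal sk * Vᵀ) = ∑ j ∈ Sᶜ, s j ^ 2 := by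
    rw [hSVD, ← Matrix.sub_mul, ← Matrix.mul_sub, diagonal_sub,
      frobSq_mul_diagonal_mul_transpose hU hV, ← sum_add_sum_compl S,
      sum_eq_zero fun j hj => by simp [sk, (hS j).1 hj], zero_add]
    exact sum_congr rfl fun j hj => by simp [sk, (hS j).not.1 (mem_compl.1 hj)]
  have hcols : frobSq ((X - P) * V) = ∑ j, ‖s j • colVec U j - colVec (P * V) j‖ ^ 2 := by
    have hXV : X * V = U * diagonal s := by rw [hSVD, Matrix.mul_assoc, hV, Matrix.mul_one]
    rw [frobSq_eq_sum_norm_sq_colVec]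
    refine sum_congr rfl fun j _ => ?_
    congr 2
    ext i
    simp [colVec, Matrix.sub_mul, hXV, mul_diagonal, mul_comm]
  have hgap : ∀ i ∈ S, ∀ j ∉ S, s j ^ 2 < s i ^ 2 := fun i hi j hj => by
    rw [hS] at hi hj
    exact pow_lt_pow_left₀ (hs (by omega)) (hspos j).le two_ne_zero
  have key := (orthonormal_colVec hU).eq_truncation_of_sum_norm_sub_sq_le
    (fun i _ => (hspos i).ne') hgap (LinearMap.range (toEuclideanLin P))
    (by simpa [finrank_range_toEuclideanLin, S, Fin.card_filter_val_lt, hkr] using hP.1)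
    (fun j => colVec_mul P V j ▸ LinearMap.mem_range_self _ _)
    (hcols ▸ (frobSq_mul_le _ hV).trans (herr ▸ hP.2 _ hrank))
  ext i j
  have hij := congrArg (· i) (key j)
  by_cases hj : (j : ℕ) < k <;>
    simp [colVec, mul_diagonal, hS, hj, sk, mul_comm] at hij ⊢ <;> exact hij

theorem stmt17_general {d N r k : ℕ} (hkr : k ≤ r)
    (X : Matrix (Fin d) (Fin N) ℝ)
    (U : Matrix (Fin d) (Fin r) ℝ) (V : Matrix (Fin N) (Fin r) ℝ) (s : Fin r → ℝ)
    (hU : Uᵀ * U = 1) (hV : Vᵀ * V = 1)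
    (hs : StrictAnti s) (hspos : ∀ i, 0 < s i)
    (hSVD : X = U * Matrix.diagonal s * Vᵀ)
    (Pk : Matrix (Fin d) (Fin N) ℝ) (hPk : IsBestRankApprox k X Pk)
    (pinv : Matrix (Fin N) (Fin d) ℝ) (hpinv : IsMoorePenroseInv X pinv) :
    ∀ l : Fin r → ℝ,
      (Pk * pinv) *ᵥ (U *ᵥ l) =
        (U.submatrix id (Fin.castLE hkr) * (U.submatrix id (Fin.castLE hkr))ᵀ) *ᵥ (U *ᵥ l) := by
  have hpinv_eq : pinv = V * diagonal s⁻¹ * Uᵀ := hpinv.unique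
    (hSVD ▸ isMoorePenroseInv_mul_diagonal_mul_transpose hU hV fun i => (hspos i).ne')
  have hWk :
      Pk * pinv = U * diagonal (fun j : Fin r => if (j : ℕ) < k then (1 : ℝ) else 0) * Uᵀ := by
    rw [hpinv_eq, ← Matrix.mul_assoc, ← Matrix.mul_assoc,
      hPk.mul_eq_of_svd hkr hU hV hs hspos hSVD, Matrix.mul_assoc U, diagonal_mul_diagonal]
    congr
    ext j
    split_ifs <;> simp [(hspos j).ne']
  intro l
  rw [hWk, submatrix_castLE_mul_transpose]

/-- In the noiseless case `A = 0`, the linear DAE minimizer `W* = P_k(X) X†` acts on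
test points `x = U l` in the column span of `X` as the orthogonal projection onto the
top-`k` left singular subspace of `X`. -/
theorem stmt17 {d N r k : ℕ} (hkr : k ≤ r) (hdN : N ≤ d)
    (X : Matrix (Fin d) (Fin N) ℝ)
    (U : Matrix (Fin d) (Fin r) ℝ) (V : Matrix (Fin N) (Fin r) ℝ) (s : Fin r → ℝ)
    (hU : Uᵀ * U = 1) (hV : Vᵀ * V = 1)
    (hs : StrictAnti s) (hspos : ∀ i, 0 < s i)
    (hSVD : X = U * Matrix.diagonal s * Vᵀ)
    (Pk : Matrix (Fin d) (Fin N) ℝ) (hPk : IsBestRankApprox k X Pk)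
    (pinv : Matrix (Fin N) (Fin d) ℝ) (hpinv : IsMoorePenroseInv X pinv) :
    ∀ l : Fin r → ℝ,
      (Pk * pinv) *ᵥ (U *ᵥ l) =
        (U.submatrix id (Fin.castLE hkr) * (U.submatrix id (Fin.castLE hkr))ᵀ) *ᵥ (U *ᵥ l) :=
  stmt17_general hkr X U V s hU hV hs hspos hSVD Pk hPk pinv hpinv
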